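/- Let α, β : Bool → Bool → Bool be essential binary operations, and let σ : Bool × Bool → Bool × Bool be the brassiere map σ(x, y) = (α x y, β x y). Then σ satisfies the Artin prebraid (Yang–Baxter) relation (σ × id) ∘ (id × σ) ∘ (σ × id) = (id × σ) ∘ (σ × id) ∘ (id × σ) if and only if α ∈ {and, or} and β ∈ {and, or}; in particular, exactly four prebraids arise from pairs of essential binary Boolean operations, namely those built from conjunction and disjunction only. -/

import Mathlib

/-! Conjunction and disjunction are the meet and join of the distributive lattice `Bool`, and in
any distributive lattice the four maps `(x, y) ↦ (x ⊓ y, x ⊔ y)`, `(x ⊔ y, x ⊓ y)`,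
`(x ⊓ y, x ⊓ y)`, `(x ⊔ y, x ⊔ y)` satisfy the braid relation: componentwise it reduces to
absorption and the median identity `x ⊓ y ⊔ (x ⊔ y) ⊓ z = (x ⊔ y ⊓ z) ⊓ (y ⊔ z)`.
Conversely, once essentiality and the braid relation are written as quantifier-free conditions
on `Bool`, the remaining pairs of essential operations are excluded by a finite check. -/

/-- The Artin prebraid (Yang–Baxter) relation for a map `σ : S × S → S × S`. -/
def ArtinPrebraid {S : Type*} (σ : S × S → S × S) : Prop :=
  (fun p : S × S × S => ((σ (p.1, p.2.1)).1, (σ (p.1, p.2.1)).2, p.2.2)) ∘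
      (fun p : S × S × S => (p.1, σ p.2)) ∘
      (fun p : S × S × S => ((σ (p.1, p.2.1)).1, (σ (p.1, p.2.1)).2, p.2.2)) =
    (fun p : S × S × S => (p.1, σ p.2)) ∘
      (fun p : S × S × S => ((σ (p.1, p.2.1)).1, (σ (p.1, p.2.1)).2, p.2.2)) ∘
      (fun p : S × S × S => (p.1, σ p.2))

/-- A binary operation is essential if it factors through neither projection. -/
def EssentialBinary {S : Type*} (f : S → S → S) : Prop :=
  (¬ ∃ g : S → S, ∀ x y : S, f x y = g x) ∧ (¬ ∃ g : S → S, ∀ x y : S, f x y = g y)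

section Essential

variable {S : Type*} (f : S → S → S)

theorem exists_eq_comp_fst_iff :
    (∃ g : S → S, ∀ x y, f x y = g x) ↔ ∀ x y y', f x y = f x y' :=
  ⟨fun ⟨_, hg⟩ x y y' => (hg x y).trans (hg x y').symm,
    fun h => ⟨fun x => f x x, fun x y => h x y x⟩⟩

theorem exists_eq_comp_snd_iff :
    (∃ g : S → S, ∀ x y, f x y = g y) ↔ ∀ x x' y, f x y = f x' y :=
  ⟨fun ⟨_, hg⟩ x x' y => (hg x y).trans (hg x' y).symm,
    fun h => ⟨fun y => f y y, fun x y => h x y y⟩⟩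

theorem essentialBinary_iff :
    EssentialBinary f ↔ (∃ x y y', f x y ≠ f x y') ∧ ∃ x x' y, f x y ≠ f x' y := by
  simp only [EssentialBinary, exists_eq_comp_fst_iff, exists_eq_comp_snd_iff, not_forall]

end Essential

theorem artinPrebraid_iff {S : Type*} (α β : S → S → S) :
    ArtinPrebraid (fun p : S × S => (α p.1 p.2, β p.1 p.2)) ↔ ∀ x y z,
      α (α x y) (α (β x y) z) = α x (α y z) ∧
      β (α x y) (α (β x y) z) = α (β x (α y z)) (β y z) ∧
      β (β x y) z = β (β x (α y z)) (β y z) := by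
  simp only [ArtinPrebraid, funext_iff, Function.comp_apply, Prod.forall, Prod.mk.injEq]

theorem artinPrebraid_inf_inf {L : Type*} [SemilatticeInf L] :
    ArtinPrebraid (fun p : L × L => (p.1 ⊓ p.2, p.1 ⊓ p.2)) :=
  (artinPrebraid_iff _ _).2 fun _ _ _ => by refine ⟨?_, ?_, ?_⟩ <;> grind

theorem artinPrebraid_sup_sup {L : Type*} [SemilatticeSup L] :
    ArtinPrebraid (fun p : L × L => (p.1 ⊔ p.2, p.1 ⊔ p.2)) :=
  artinPrebraid_inf_inf (L := Lᵒᵈ)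

section DistribLattice

variable {L : Type*} [DistribLattice L]

theorem inf_sup_inf_eq_sup_inf_sup (x y z : L) :
    x ⊓ y ⊔ (x ⊔ y) ⊓ z = (x ⊔ y ⊓ z) ⊓ (y ⊔ z) := by
  rw [inf_sup_right, inf_sup_right, inf_sup_left, inf_of_le_left (inf_le_sup : y ⊓ z ≤ y ⊔ z),
    sup_assoc]

theorem artinPrebraid_inf_sup : ArtinPrebraid (fun p : L × L => (p.1 ⊓ p.2, p.1 ⊔ p.2)) := by
  refine (artinPrebraid_iff _ _).2 fun x y z => ⟨?_, inf_sup_inf_eq_sup_inf_sup x y z, ?_⟩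
  · rw [← inf_assoc, inf_of_le_left inf_le_sup, inf_assoc]
  · rw [sup_assoc x (y ⊓ z), sup_of_le_right inf_le_sup, sup_assoc]

theorem artinPrebraid_sup_inf : ArtinPrebraid (fun p : L × L => (p.1 ⊔ p.2, p.1 ⊓ p.2)) :=
  artinPrebraid_inf_sup (L := Lᵒᵈ)

end DistribLattice

def Bool.ofTruthTable (a b c d : Bool) : Bool → Bool → Bool :=
  fun x y => cond x (cond y a b) (cond y c d)

theorem Bool.forall_binop_iff_forall_ofTruthTable {p : (Bool → Bool → Bool) → Prop} :
    (∀ f, p f) ↔ ∀ a b c d, p (Bool.ofTruthTable a b c d) := by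
  refine ⟨fun h _ _ _ _ => h _, fun h f => ?_⟩
  convert h (f true true) (f true false) (f false true) (f false false)
  funext x y
  cases x <;> cases y <;> rfl

theorem Bool.eq_and_or_of_artinPrebraid : ∀ α β : Bool → Bool → Bool,
    EssentialBinary α → EssentialBinary β →
    ArtinPrebraid (fun p : Bool × Bool => (α p.1 p.2, β p.1 p.2)) →
    (α = and ∨ α = or) ∧ (β = and ∨ β = or) := by
  simp only [essentialBinary_iff, artinPrebraid_iff, Bool.forall_binop_iff_forall_ofTruthTable]
  decide

/-- for essential binary Boolean operations `α, β`, the brassiere map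
satisfies the Artin prebraid relation iff `α ∈ {and, or}` and `β ∈ {and, or}`. -/
theorem bool_prebraid_iff_and_or (α β : Bool → Bool → Bool)
    (hα : EssentialBinary α) (hβ : EssentialBinary β) :
    ArtinPrebraid (fun p : Bool × Bool => (α p.1 p.2, β p.1 p.2)) ↔
      ((α = Bool.and ∨ α = Bool.or) ∧ (β = Bool.and ∨ β = Bool.or)) := by
  refine ⟨Bool.eq_and_or_of_artinPrebraid α β hα hβ, ?_⟩
  rintro ⟨rfl | rfl, rfl | rfl⟩
  · exact artinPrebraid_inf_inf
  · exact artinPrebraid_inf_sup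
  · exact artinPrebraid_sup_inf
  · exact artinPrebraid_sup_sup
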